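/- arXiv:1708.08576 — 2 statements merged into one kernel-verified Lean document; each statement's English description precedes it below -/
import Mathlib

section
/- For every η > 0 and every ε > 0, there exist M ≥ 3 and p ∈ (0,1)^M such that δ(M,p) > η, δ(M,p) > 2, and the standard excited random walk (Y_n)_{n≥0} with M cookies and cookie strength vector p satisfies limsup_{n→∞} Y_n / n < ε almost surely. -/
open MeasureTheory ProbabilityTheory Filter Topology
open scoped ENNReal NNReal

/-- The success probability of the `j+1`-st visit to a site: `p (j+1)` while cookies
remain (`j < M`), and the bias parameter `p₀` afterwards. -/
noncomputable def cookieSeq (M : ℕ) (p : Fin M → ℝ) (p₀ : ℝ) (j : ℕ) : ℝ :=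
  if h : j < M then p ⟨j, h⟩ else p₀

/-- `IsEARW P M p p₀ X` : under the probability measure `P`, the process `X` is an
excited asymmetric random walk with `M` cookies of strengths `p ∈ (0,1)^M` and bias
parameter `p₀`: it starts at `0`, moves by `±1` steps, and conditionally on the path
`(X 0, …, X n)` it steps right with probability `p i` on the event
`#{m ≤ n : X m = X n} = i` for `1 ≤ i ≤ M`, and with probability `p₀` on the event
`#{m ≤ n : X m = X n} > M`. -/
structure IsEARW {Ω : Type*} [MeasurableSpace Ω] (P : Measure Ω)
    (M : ℕ) (p : Fin M → ℝ) (p₀ : ℝ) (X : ℕ → Ω → ℤ) : Prop where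
  measurable : ∀ n, Measurable (X n)
  init : ∀ ω, X 0 ω = 0
  steps : ∀ ω n, |X (n + 1) ω - X n ω| = 1
  cond : ∀ (n : ℕ) (w : Fin (n + 1) → ℤ),
    P ({ω | X (n + 1) ω = w (Fin.last n) + 1} ∩ {ω | ∀ m : Fin (n + 1), X m ω = w m})
      = ENNReal.ofReal
          (cookieSeq M p p₀
            ((Finset.univ.filter fun m : Fin (n + 1) => w m = w (Fin.last n)).card - 1))
        * P {ω | ∀ m : Fin (n + 1), X m ω = w m}

/-!
All `M` cookies get the same strength `1/2 + β`. Conditionally on the past, the walk then steps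
right with probability at most `q = 1/2 + β` and left with probability at most `1/2`, so an
`n`-step path has probability at most the product of these bounds along it. Tilting each step by
`x ^ (±1)` (a Chernoff bound) gives `P(Y n ≥ a n) ≤ ρ ^ n` with `ρ = (q x + 1/(2x)) x^(-a)`.
For `a = ε/2` and `x = 1 + a` one has `ρ < 1` at `β = 0`, hence for small `β > 0`, and
Borel–Cantelli yields `limsup Y n / n ≤ a < ε` almost surely. The drift `δ = 2βM` exceeds
`max η 2` once `M` is large, and increasing `M` does not change `β`.
-/

def signStep (b : Bool) : ℤ := if b then 1 else -1

lemma signStep_decide_eq_one {d : ℤ} (hd : |d| = 1) : signStep (decide (d = 1)) = d := by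
  rcases abs_eq zero_le_one |>.mp hd with rfl | rfl <;> rfl

lemma signStep_eq_one_iff (b : Bool) : signStep b = 1 ↔ b = true := by
  cases b <;> decide

/-- The lattice path whose `k`-th step is `signStep (s k)` for `k < n`, constant after time `n`. -/
def signPath {n : ℕ} (s : Fin n → Bool) (m : ℕ) : ℤ :=
  ∑ k ∈ Finset.range m, if h : k < n then signStep (s ⟨k, h⟩) else 0

lemma signPath_succ {n : ℕ} (s : Fin n → Bool) {k : ℕ} (hk : k < n) :
    signPath s (k + 1) = signPath s k + signStep (s ⟨k, hk⟩) := by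
  rw [signPath, Finset.sum_range_succ, dif_pos hk, signPath]

lemma signPath_self {n : ℕ} (s : Fin n → Bool) : signPath s n = ∑ i, signStep (s i) := by
  rw [signPath, ← Fin.sum_univ_eq_sum_range]
  exact Finset.sum_congr rfl fun i _ => dif_pos i.isLt

lemma prod_range_ite_signPath {β : Type*} [CommMonoid β] {n : ℕ} (s : Fin n → Bool)
    (a b : β) :
    ∏ k ∈ Finset.range n, (if signPath s (k + 1) = signPath s k + 1 then a else b)
      = ∏ i, if s i then a else b := by
  rw [← Fin.prod_univ_eq_prod_range]
  refine Finset.prod_congr rfl fun i _ => ?_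
  simp only [signPath_succ s i.isLt, add_right_inj, signStep_eq_one_iff]

open Finset in
lemma sum_prod_ite_le_of_le_sum_signStep {n : ℕ} {u d x a : ℝ} (hu : 0 ≤ u) (hd : 0 ≤ d)
    (hx : 1 ≤ x) :
    ∑ s : Fin n → Bool with a ≤ ∑ i, signStep (s i), ∏ i, (if s i then u else d)
      ≤ x ^ (-a) * (u * x + d / x) ^ n := by
  have hx0 : 0 < x := by linarith
  have hweight : ∀ b : Bool, 0 ≤ if b then u * x else d / x := by
    intro b; cases b <;> simp only [Bool.false_eq_true, if_true, if_false] <;> positivity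
  have htilt : ∀ s : Fin n → Bool, ∏ i, (if s i then u * x else d / x)
      = x ^ ((∑ i, signStep (s i) : ℤ) : ℝ) * ∏ i, (if s i then u else d) := by
    intro s
    rw [Int.cast_sum, Real.rpow_sum_of_pos hx0, ← prod_mul_distrib]
    refine prod_congr rfl fun i _ => ?_
    cases s i <;> simp [signStep, Real.rpow_neg_one, div_eq_mul_inv, mul_comm]
  have hterm : ∀ s : Fin n → Bool, a ≤ ∑ i, signStep (s i) →
      ∏ i, (if s i then u else d) ≤ x ^ (-a) * ∏ i, (if s i then u * x else d / x) := by
    intro s hs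
    have hone : 1 ≤ x ^ (-a) * x ^ ((∑ i, signStep (s i) : ℤ) : ℝ) := by
      rw [← Real.rpow_add hx0]
      exact Real.one_le_rpow hx (by linarith)
    rw [htilt, ← mul_assoc]
    exact le_mul_of_one_le_left (prod_nonneg fun i _ => by split <;> assumption) hone
  calc ∑ s : Fin n → Bool with a ≤ ∑ i, signStep (s i), ∏ i, (if s i then u else d)
      ≤ ∑ s : Fin n → Bool with a ≤ ∑ i, signStep (s i),
          x ^ (-a) * ∏ i, (if s i then u * x else d / x) :=
        sum_le_sum fun s hs => hterm s (mem_filter.mp hs).2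
    _ ≤ ∑ s : Fin n → Bool, x ^ (-a) * ∏ i, (if s i then u * x else d / x) :=
        sum_le_sum_of_subset_of_nonneg (filter_subset _ _) fun s _ _ =>
          mul_nonneg (Real.rpow_nonneg hx0.le _) (prod_nonneg fun i _ => hweight _)
    _ = x ^ (-a) * (u * x + d / x) ^ n := by
        rw [← mul_sum, ← Fintype.sum_pow (fun b : Bool => if b then u * x else d / x),
          Fintype.sum_bool]
        simp only [if_true, Bool.false_eq_true, if_false]

def pathCylinder {Ω : Type*} (X : ℕ → Ω → ℤ) (n : ℕ) (w : ℕ → ℤ) : Set Ω :=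
  {ω | ∀ m ≤ n, X m ω = w m}

lemma pathCylinder_succ {Ω : Type*} (X : ℕ → Ω → ℤ) (n : ℕ) (w : ℕ → ℤ) :
    pathCylinder X (n + 1) w = {ω | X (n + 1) ω = w (n + 1)} ∩ pathCylinder X n w := by
  ext ω
  simp only [pathCylinder, Set.mem_ofPred_eq, Set.mem_inter_iff, Nat.le_succ_iff_eq_or_le]
  constructor
  · intro hω
    exact ⟨hω _ (Or.inl rfl), fun m hm => hω m (Or.inr hm)⟩
  · rintro ⟨hlast, hω⟩ m (rfl | hm)
    exacts [hlast, hω m hm]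

namespace IsEARW

variable {Ω : Type*} [MeasurableSpace Ω] {P : Measure Ω} {M : ℕ} {p : Fin M → ℝ}
  {p₀ : ℝ} {X : ℕ → Ω → ℤ}

lemma succ_eq_add_one_or_sub_one (h : IsEARW P M p p₀ X) (ω : Ω) (n : ℕ) :
    X (n + 1) ω = X n ω + 1 ∨ X (n + 1) ω = X n ω - 1 := by
  rcases abs_eq zero_le_one |>.mp (h.steps ω n) with h' | h' <;> omega

lemma neg_le (h : IsEARW P M p p₀ X) (ω : Ω) (n : ℕ) : -(n : ℤ) ≤ X n ω := by
  induction n with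
  | zero => simp [h.init ω]
  | succ n ih => rcases h.succ_eq_add_one_or_sub_one ω n with h' | h' <;> omega

lemma measurableSet_pathCylinder (h : IsEARW P M p p₀ X) (n : ℕ) (w : ℕ → ℤ) :
    MeasurableSet (pathCylinder X n w) := by
  have : pathCylinder X n w = ⋂ m ∈ Set.Iic n, X m ⁻¹' {w m} := by
    ext ω; simp [pathCylinder]
  rw [this]
  exact .biInter (Set.to_countable _) fun m _ => h.measurable m (measurableSet_singleton _)

lemma exists_measure_up_inter_pathCylinder (h : IsEARW P M p p₀ X) (n : ℕ) (w : ℕ → ℤ) :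
    ∃ j, P ({ω | X (n + 1) ω = w n + 1} ∩ pathCylinder X n w)
      = ENNReal.ofReal (cookieSeq M p p₀ j) * P (pathCylinder X n w) := by
  have hcyl : {ω | ∀ m : Fin (n + 1), X m ω = w m} = pathCylinder X n w := by
    ext ω
    exact ⟨fun hω m hm => hω ⟨m, Nat.lt_succ_of_le hm⟩,
      fun hω m => hω m (Nat.le_of_lt_succ m.isLt)⟩
  have := h.cond n fun m => w m
  rw [Fin.val_last, hcyl] at this
  exact ⟨_, this⟩

lemma measure_down_inter_pathCylinder_le [IsFiniteMeasure P] (h : IsEARW P M p p₀ X) {r : ℝ}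
    (hr : ∀ j, r ≤ cookieSeq M p p₀ j) (n : ℕ) (w : ℕ → ℤ) :
    P ({ω | X (n + 1) ω = w n - 1} ∩ pathCylinder X n w)
      ≤ ENNReal.ofReal (1 - r) * P (pathCylinder X n w) := by
  set B := pathCylinder X n w
  set U := {ω | X (n + 1) ω = w n + 1} ∩ B
  have hdown : {ω | X (n + 1) ω = w n - 1} ∩ B = B \ U := by
    ext ω
    simp only [U, Set.mem_inter_iff, Set.mem_sdiff, Set.mem_ofPred_eq]
    have hn : ω ∈ B → X n ω = w n := fun hω => hω n le_rfl
    rcases h.succ_eq_add_one_or_sub_one ω n with h' | h' <;> constructor <;> grind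
  obtain ⟨j, hU⟩ := h.exists_measure_up_inter_pathCylinder n w
  have hUmeas : MeasurableSet U :=
    (h.measurable _ (measurableSet_singleton _)).inter (h.measurableSet_pathCylinder n w)
  have hone : 1 - ENNReal.ofReal r ≤ ENNReal.ofReal (1 - r) := by
    rw [tsub_le_iff_right, ← ENNReal.ofReal_one]
    exact (congrArg ENNReal.ofReal (sub_add_cancel 1 r)).ge.trans ENNReal.ofReal_add_le
  calc P ({ω | X (n + 1) ω = w n - 1} ∩ B) = P B - P U := by
        rw [hdown, measure_sdiff Set.inter_subset_right hUmeas.nullMeasurableSet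
          (measure_ne_top _ _)]
    _ ≤ P B - ENNReal.ofReal r * P B := by
        rw [hU]; gcongr; exact hr j
    _ = (1 - ENNReal.ofReal r) * P B := by
        rw [ENNReal.sub_mul fun _ _ => measure_ne_top _ _, one_mul]
    _ ≤ ENNReal.ofReal (1 - r) * P B := by gcongr

theorem measure_pathCylinder_le [IsProbabilityMeasure P] (h : IsEARW P M p p₀ X) {q r : ℝ}
    (hlo : ∀ j, r ≤ cookieSeq M p p₀ j) (hhi : ∀ j, cookieSeq M p p₀ j ≤ q)
    (n : ℕ) (w : ℕ → ℤ) :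
    P (pathCylinder X n w)
      ≤ ∏ k ∈ Finset.range n, ENNReal.ofReal (if w (k + 1) = w k + 1 then q else 1 - r) := by
  induction n with
  | zero => simpa using prob_le_one
  | succ n ih =>
    rw [pathCylinder_succ, Finset.prod_range_succ, mul_comm _ (ENNReal.ofReal _)]
    split_ifs with hup
    · obtain ⟨j, hj⟩ := h.exists_measure_up_inter_pathCylinder n w
      rw [hup, hj]
      gcongr
      exact hhi j
    · have hsub : {ω | X (n + 1) ω = w (n + 1)} ∩ pathCylinder X n w
          ⊆ {ω | X (n + 1) ω = w n - 1} ∩ pathCylinder X n w := by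
        rintro ω ⟨hlast, hω⟩
        have hn : X n ω = w n := hω n le_rfl
        refine ⟨?_, hω⟩
        simp only [Set.mem_ofPred_eq] at hlast ⊢
        rcases h.succ_eq_add_one_or_sub_one ω n with h' | h' <;> omega
      calc _ ≤ _ := measure_mono hsub
        _ ≤ _ := h.measure_down_inter_pathCylinder_le hlo n w
        _ ≤ _ := by gcongr

lemma exists_mem_pathCylinder_signPath (h : IsEARW P M p p₀ X) (ω : Ω) (n : ℕ) :
    ∃ s : Fin n → Bool, ω ∈ pathCylinder X n (signPath s) := by
  refine ⟨fun i => decide (X (i + 1) ω - X i ω = 1), fun m hm => ?_⟩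
  induction m with
  | zero => exact h.init ω
  | succ m ih =>
    rw [signPath_succ _ hm, ← ih (Nat.le_of_succ_le hm), signStep_decide_eq_one (h.steps ω m)]
    ring

theorem measure_mul_le_le_ofReal_pow [IsProbabilityMeasure P] (h : IsEARW P M p p₀ X)
    {q r x a : ℝ} (hq : 0 ≤ q) (hr : r ≤ 1) (hlo : ∀ j, r ≤ cookieSeq M p p₀ j)
    (hhi : ∀ j, cookieSeq M p p₀ j ≤ q) (hx : 1 ≤ x) (n : ℕ) :
    P {ω | a * n ≤ X n ω} ≤ ENNReal.ofReal (((q * x + (1 - r) / x) * x ^ (-a)) ^ n) := by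
  classical
  set S := Finset.univ.filter fun s : Fin n → Bool => a * n ≤ ∑ i, signStep (s i)
  have hcover : {ω | a * n ≤ X n ω} ⊆ ⋃ s ∈ S, pathCylinder X n (signPath s) := by
    intro ω hω
    obtain ⟨s, hs⟩ := h.exists_mem_pathCylinder_signPath ω n
    have hend : X n ω = ∑ i, signStep (s i) := (hs n le_rfl).trans (signPath_self s)
    exact Set.mem_biUnion (Finset.mem_filter.mpr ⟨Finset.mem_univ s, hend ▸ hω⟩) hs
  have hweight : ∀ b : Bool, 0 ≤ if b then q else 1 - r := by
    intro b; cases b <;> simp only [Bool.false_eq_true, if_true, if_false] <;> linarith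
  calc P {ω | a * n ≤ X n ω} ≤ ∑ s ∈ S, P (pathCylinder X n (signPath s)) :=
        (measure_mono hcover).trans (measure_biUnion_finset_le _ _)
    _ ≤ ∑ s ∈ S, ENNReal.ofReal (∏ i, if s i then q else 1 - r) := by
        refine Finset.sum_le_sum fun s _ => (h.measure_pathCylinder_le hlo hhi n _).trans_eq ?_
        rw [ENNReal.ofReal_prod_of_nonneg fun i _ => hweight _]
        simp only [apply_ite ENNReal.ofReal]
        exact prod_range_ite_signPath s _ _
    _ = ENNReal.ofReal (∑ s ∈ S, ∏ i, if s i then q else 1 - r) :=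
        (ENNReal.ofReal_sum_of_nonneg fun s _ => Finset.prod_nonneg fun i _ => hweight _).symm
    _ ≤ ENNReal.ofReal (((q * x + (1 - r) / x) * x ^ (-a)) ^ n) := by
        gcongr
        refine (sum_prod_ite_le_of_le_sum_signStep hq (by linarith) hx).trans_eq ?_
        rw [mul_pow, mul_comm, ← Real.rpow_mul_natCast (by linarith), neg_mul]

theorem ae_limsup_div_le [IsProbabilityMeasure P] (h : IsEARW P M p p₀ X) {q r x a : ℝ}
    (hq : 0 ≤ q) (hr : r ≤ 1) (hlo : ∀ j, r ≤ cookieSeq M p p₀ j)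
    (hhi : ∀ j, cookieSeq M p p₀ j ≤ q) (hx : 1 ≤ x)
    (hρ : (q * x + (1 - r) / x) * x ^ (-a) < 1) :
    ∀ᵐ ω ∂P, limsup (fun n : ℕ => (X n ω : ℝ) / n) atTop ≤ a := by
  have hρ0 : 0 ≤ (q * x + (1 - r) / x) * x ^ (-a) := by
    have : 0 ≤ 1 - r := by linarith
    have : 0 ≤ x := by linarith
    positivity
  have hsum : ∑' n : ℕ, P {ω | a * n ≤ X n ω} ≠ ∞ := by
    refine ne_top_of_le_ne_top (tsum_geometric_lt_top.mpr ?_).ne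
      (ENNReal.tsum_le_tsum fun n => (h.measure_mul_le_le_ofReal_pow hq hr hlo hhi hx n).trans_eq
        (ENNReal.ofReal_pow hρ0 n))
    exact ENNReal.ofReal_lt_one.mpr hρ
  filter_upwards [ae_eventually_notMem hsum] with ω hω
  have hlower : ∀ᶠ n : ℕ in atTop, (-1 : ℝ) ≤ (X n ω : ℝ) / n := by
    filter_upwards [eventually_ge_atTop 1] with n hn
    rw [le_div_iff₀ (by exact_mod_cast hn), neg_one_mul]
    exact_mod_cast h.neg_le ω n
  refine limsup_le_of_le (isCoboundedUnder_le_of_eventually_le atTop hlower) ?_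
  filter_upwards [hω, eventually_ge_atTop 1] with n hn hn1
  rw [div_le_iff₀ (by exact_mod_cast hn1)]
  exact (not_le.mp hn).le

end IsEARW

lemma add_inv_div_two_lt_rpow {t : ℝ} (ht : 0 < t) :
    ((1 + t) + (1 + t)⁻¹) / 2 < (1 + t) ^ t := by
  have h1t : 0 < 1 + t := by linarith
  have hlog : t / (1 + t) ≤ Real.log (1 + t) := by
    have := Real.one_sub_inv_le_log_of_pos h1t
    rwa [show 1 - (1 + t)⁻¹ = t / (1 + t) by field_simp; ring] at this
  calc ((1 + t) + (1 + t)⁻¹) / 2 = 1 + t ^ 2 / (2 * (1 + t)) := by field_simp; ring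
    _ < 1 + t * (t / (1 + t)) := by
        rw [mul_div_assoc', ← sq]
        gcongr
        linarith
    _ ≤ Real.log (1 + t) * t + 1 := by nlinarith
    _ ≤ Real.exp (Real.log (1 + t) * t) := Real.add_one_le_exp _
    _ = (1 + t) ^ t := (Real.rpow_def_of_pos h1t t).symm

lemma exists_bias_chernoff_lt_one {a : ℝ} (ha : 0 < a) :
    ∃ β : ℝ, 0 < β ∧ β < 1 / 2 ∧
      ∃ x, 1 ≤ x ∧ ((1 / 2 + β) * x + (1 - 1 / 2) / x) * x ^ (-a) < 1 := by
  set x := 1 + a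
  have hx0 : 0 < x := by positivity
  have hρ0 : ((1 / 2 + 0) * x + (1 - 1 / 2) / x) * x ^ (-a) < 1 := by
    rw [Real.rpow_neg hx0.le, ← div_eq_mul_inv, div_lt_one (by positivity)]
    refine lt_of_eq_of_lt ?_ (add_inv_div_two_lt_rpow ha)
    ring
  have hcont : Continuous fun β : ℝ => ((1 / 2 + β) * x + (1 - 1 / 2) / x) * x ^ (-a) := by
    fun_prop
  obtain ⟨β, hρ, hβ⟩ := (((hcont.tendsto 0).eventually_lt_const hρ0).filter_mono
    nhdsWithin_le_nhds |>.and (Ioo_mem_nhdsGT (by norm_num : (0 : ℝ) < 1 / 2))).exists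
  exact ⟨β, hβ.1, hβ.2, x, by simp [x, ha.le], hρ⟩

theorem large_delta_small_speed_general (η ε : ℝ) (hε : 0 < ε) :
    ∃ M : ℕ, 3 ≤ M ∧ ∃ p : Fin M → ℝ,
      (∀ i, p i ∈ Set.Ioo (0 : ℝ) 1)
      ∧ η < ∑ i, (2 * p i - 1)
      ∧ 2 < ∑ i, (2 * p i - 1)
      ∧ ∀ (Ω : Type) [MeasurableSpace Ω] (P : Measure Ω) [IsProbabilityMeasure P]
          (Y : ℕ → Ω → ℤ), IsEARW P M p (1 / 2) Y →
          ∀ᵐ ω ∂P, Filter.limsup (fun n : ℕ => (Y n ω : ℝ) / n) atTop < ε := by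
  obtain ⟨β, hβ0, hβ, x, hx, hρ⟩ := exists_bias_chernoff_lt_one (half_pos hε)
  obtain ⟨M, hM⟩ := exists_nat_gt (max 3 (max η 2 / (2 * β)))
  have hδ : ∑ _i : Fin M, (2 * (1 / 2 + β) - 1) = M * (2 * β) := by simp; ring
  have hδ_gt : max η 2 < M * (2 * β) :=
    (div_lt_iff₀ (by positivity)).mp ((le_max_right _ _).trans_lt hM)
  refine ⟨M, ?_, fun _ => 1 / 2 + β, fun _ => ⟨by linarith, by linarith⟩, ?_, ?_, ?_⟩
  · exact_mod_cast ((le_max_left _ _).trans_lt hM).le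
  · exact hδ ▸ (le_max_left _ _).trans_lt hδ_gt
  · exact hδ ▸ (le_max_right _ _).trans_lt hδ_gt
  · intro Ω _ P _ Y hY
    have hcookie :
        ∀ j, cookieSeq M (fun _ => 1 / 2 + β) (1 / 2) j ∈ Set.Icc (1 / 2) (1 / 2 + β) := by
      intro j
      unfold cookieSeq
      split_ifs <;> constructor <;> linarith
    filter_upwards [hY.ae_limsup_div_le (by linarith) (by norm_num) (fun j => (hcookie j).1)
      (fun j => (hcookie j).2) hx hρ] with ω hω
    exact hω.trans_lt (half_lt_self hε)

/-- **Arbitrarily large `δ` with arbitrarily small speed.**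
For every `η > 0` and `ε > 0` there exist `M ≥ 3` and `p ∈ (0,1)^M` with
`δ(M,p) > η` and `δ(M,p) > 2`, such that any standard excited random walk with `M`
cookies and cookie vector `p` satisfies `limsup Y n / n < ε` almost surely. -/
theorem large_delta_small_speed (η ε : ℝ) (hη : 0 < η) (hε : 0 < ε) :
    ∃ M : ℕ, 3 ≤ M ∧ ∃ p : Fin M → ℝ,
      (∀ i, p i ∈ Set.Ioo (0 : ℝ) 1)
      ∧ η < ∑ i, (2 * p i - 1)
      ∧ 2 < ∑ i, (2 * p i - 1)
      ∧ ∀ (Ω : Type) [MeasurableSpace Ω] (P : Measure Ω) [IsProbabilityMeasure P]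
          (Y : ℕ → Ω → ℤ), IsEARW P M p (1 / 2) Y →
          ∀ᵐ ω ∂P, Filter.limsup (fun n : ℕ => (Y n ω : ℝ) / n) atTop < ε :=
  large_delta_small_speed_general η ε hε
end

section
/- Let p_1 ∈ (0,1), p_0 ∈ (1/2,1), and set ρ = (1−p_0)/p_0 ∈ (0,1). Let π be the stationary distribution of the backwards branching-like process associated to one cookie of strength p_1 and bias parameter p_0. Then π(0) = ∏_{k=0}^{∞} ( p_1 + (1 − p_1)·(1 − ρ^k)/(1 − ρ^{k+2}) ). -/
/-!
Write `Φ(x) = ∑ π m x^m`. Splitting on the first trial, the `l`-th row of the transition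
matrix has generating function `g(x) f(x)^l`, where `f(x) = p₀ / (1 - (1 - p₀) x)` is the
generating function of the number of failures before a `p₀`-success and
`g(x) = p₁ + (1 - p₁) x f(x)`; stationarity then gives `Φ(x) = g(x) Φ(f(x))`.
The map `f` sends the gambler's-ruin probability `X k = (1 - ρ^k) / (1 - ρ^(k+1))` to `X (k+1)`,
and `g(X k) = p₁ + (1 - p₁) X k X (k+1)` is the `k`-th factor of the product. Iterating from
`X 0 = 0` gives `π 0 = (∏_{k<n} g(X k)) Φ(X n)`, and `Φ(X n) → Φ(1) = 1` because `X n → 1`;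
the product converges since `1 - g(X k) = O(ρ^k)`.
-/

open MeasureTheory ProbabilityTheory Filter Topology
open scoped ENNReal NNReal

/-- `bbTrans q l m` is the transition probability `p(l,m) = P(A (l+1) = m)` of the
backwards branching-like process: the probability that in a sequence of independent
Bernoulli trials whose `j`-th trial succeeds with probability `q j` (`j` 0-indexed),
there are exactly `m` failures before the `(l+1)`-st success.  Equivalently, among the
first `m + l` trials there are exactly `l` successes and trial `m + l` is a success. -/
noncomputable def bbTrans (q : ℕ → ℝ) (l m : ℕ) : ℝ :=
  (∑ s ∈ Finset.univ.filter
      (fun s : Fin (m + l) → Bool =>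
        (Finset.univ.filter fun j => s j = true).card = l),
    ∏ j : Fin (m + l), (if s j then q (j : ℕ) else 1 - q (j : ℕ)))
    * q (m + l)

/-- `IsStationaryDist q π` : `π` is a stationary distribution of the backwards
branching-like process with transition probabilities `bbTrans q`: a probability mass
function on `ℕ` with `π m = ∑' l, π l * p(l,m)` for all `m`. -/
def IsStationaryDist (q : ℕ → ℝ) (π : ℕ → ℝ) : Prop :=
  (∀ k, 0 ≤ π k) ∧ (∑' k, π k) = 1 ∧ ∀ m, π m = ∑' l, π l * bbTrans q l m

open Finset

noncomputable def successCountProb (w : ℕ → ℝ) (n l : ℕ) : ℝ :=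
  ∑ s ∈ univ.filter (fun s : Fin n → Bool => (univ.filter fun j => s j = true).card = l),
    ∏ j : Fin n, (if s j then w (j : ℕ) else 1 - w (j : ℕ))

theorem successCountProb_zero_zero (w : ℕ → ℝ) : successCountProb w 0 0 = 1 := by
  simp [successCountProb]

theorem successCountProb_eq_zero_of_lt {w : ℕ → ℝ} {n l : ℕ} (h : n < l) :
    successCountProb w n l = 0 := by
  refine sum_eq_zero fun s hs => absurd (mem_filter.1 hs).2 ?_
  exact ((card_filter_le _ _).trans_lt (by simpa using h)).ne

theorem card_filter_cons_eq_true {n : ℕ} (b : Bool) (t : Fin n → Bool) :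
    #{j | (Fin.cons b t : Fin (n + 1) → Bool) j = true} = #{j | t j = true} + b.toNat := by
  rw [card_filter, card_filter, Fin.sum_univ_succ]
  cases b <;> simp [add_comm]

theorem successCountProb_succ (w : ℕ → ℝ) (n l : ℕ) :
    successCountProb w (n + 1) l =
      w 0 * (∑ t ∈ univ.filter
          (fun t : Fin n → Bool => (univ.filter fun j => t j = true).card + 1 = l),
        ∏ j : Fin n, (if t j then w (j + 1) else 1 - w (j + 1))) +
      (1 - w 0) * successCountProb (fun j => w (j + 1)) n l := by
  rw [successCountProb, successCountProb, sum_filter, sum_filter, sum_filter,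
    ← (Fin.consEquiv fun _ => Bool).sum_comp, Fintype.sum_prod_type, Fintype.sum_bool,
    mul_sum, mul_sum]
  congr 1 <;> refine sum_congr rfl fun t _ => ?_
  all_goals
    simp only [Fin.consEquiv_apply, card_filter_cons_eq_true, Fin.prod_univ_succ, Fin.cons_zero,
      Fin.cons_succ, Fin.val_zero, Fin.val_succ, mul_ite, mul_zero]
    simp

theorem successCountProb_succ_zero (w : ℕ → ℝ) (n : ℕ) :
    successCountProb w (n + 1) 0 = (1 - w 0) * successCountProb (fun j => w (j + 1)) n 0 := by
  simp [successCountProb_succ]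

theorem successCountProb_succ_succ (w : ℕ → ℝ) (n l : ℕ) :
    successCountProb w (n + 1) (l + 1) =
      w 0 * successCountProb (fun j => w (j + 1)) n l +
        (1 - w 0) * successCountProb (fun j => w (j + 1)) n (l + 1) := by
  rw [successCountProb_succ]
  simp only [add_left_inj]
  rfl

theorem bbTrans_eq_successCountProb (q : ℕ → ℝ) (l m : ℕ) :
    bbTrans q l m = successCountProb q (m + l) l * q (m + l) := rfl

section FirstStep

variable (q : ℕ → ℝ)

theorem bbTrans_zero_zero : bbTrans q 0 0 = q 0 := by
  simp [bbTrans_eq_successCountProb, successCountProb_zero_zero]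

theorem bbTrans_zero_succ (m : ℕ) :
    bbTrans q 0 (m + 1) = (1 - q 0) * bbTrans (fun j => q (j + 1)) 0 m := by
  simp only [bbTrans_eq_successCountProb, add_zero, successCountProb_succ_zero]
  ring

theorem bbTrans_succ_zero (l : ℕ) :
    bbTrans q (l + 1) 0 = q 0 * bbTrans (fun j => q (j + 1)) l 0 := by
  simp only [bbTrans_eq_successCountProb, zero_add, successCountProb_succ_succ,
    successCountProb_eq_zero_of_lt (Nat.lt_succ_self l)]
  ring

theorem bbTrans_succ_succ (l m : ℕ) :
    bbTrans q (l + 1) (m + 1) =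
      q 0 * bbTrans (fun j => q (j + 1)) l (m + 1) +
        (1 - q 0) * bbTrans (fun j => q (j + 1)) (l + 1) m := by
  simp only [bbTrans_eq_successCountProb, show m + 1 + (l + 1) = m + 1 + l + 1 by ring,
    successCountProb_succ_succ, show m + (l + 1) = m + 1 + l by ring]
  ring

end FirstStep

theorem bbTrans_const (p : ℝ) (l m : ℕ) :
    bbTrans (fun _ => p) l m = (m + l).choose l * p ^ (l + 1) * (1 - p) ^ m := by
  induction l generalizing m with
  | zero =>
    induction m with
    | zero => simp [bbTrans_zero_zero]
    | succ m ih =>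
      rw [bbTrans_zero_succ, ih]
      simp only [Nat.choose_zero_right, Nat.cast_one]
      ring
  | succ l ihl =>
    induction m with
    | zero =>
      rw [bbTrans_succ_zero, ihl]
      simp only [zero_add, Nat.choose_self, Nat.cast_one, pow_zero]
      ring
    | succ m ihm =>
      rw [bbTrans_succ_succ, ihl, ihm, show m + 1 + (l + 1) = m + 1 + l + 1 by ring,
        Nat.choose_succ_succ', show m + (l + 1) = m + 1 + l by ring]
      push_cast
      ring

theorem bbTrans_nonneg {q : ℕ → ℝ} (hq : ∀ j, q j ∈ Set.Icc 0 1) (l m : ℕ) :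
    0 ≤ bbTrans q l m := by
  refine mul_nonneg (sum_nonneg fun s _ => prod_nonneg fun j _ => ?_) (hq _).1
  split_ifs
  · exact (hq j).1
  · exact sub_nonneg.2 (hq j).2

noncomputable def geomPGF (p x : ℝ) : ℝ := p / (1 - (1 - p) * x)

theorem geomPGF_mem_Icc {p x : ℝ} (hp : p ∈ Set.Ioc 0 1) (hx : x ∈ Set.Icc 0 1) :
    geomPGF p x ∈ Set.Icc 0 1 := by
  obtain ⟨hp0, hp1⟩ := hp
  obtain ⟨hx0, hx1⟩ := hx
  have hden : p ≤ 1 - (1 - p) * x := by nlinarith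
  exact ⟨div_nonneg hp0.le (by linarith), div_le_one_of_le₀ hden (by linarith)⟩

theorem hasSum_bbTrans_const_mul_pow {p x : ℝ} (h : |(1 - p) * x| < 1) (l : ℕ) :
    HasSum (fun m => bbTrans (fun _ => p) l m * x ^ m) (geomPGF p x ^ (l + 1)) := by
  have key : ∀ m, bbTrans (fun _ => p) l m * x ^ m =
      p ^ (l + 1) * ((m + l).choose l * ((1 - p) * x) ^ m) := fun m => by
    rw [bbTrans_const, mul_pow]
    ring
  have hval : geomPGF p x ^ (l + 1) = p ^ (l + 1) * (1 / (1 - (1 - p) * x) ^ (l + 1)) := by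
    rw [geomPGF, div_pow, mul_one_div]
  simp only [key, hval]
  exact (hasSum_choose_mul_geometric_of_norm_lt_one (r := (1 - p) * x) l h).mul_left _

section FirstStepGeneratingFunction

variable {q : ℕ → ℝ} {x : ℝ}

theorem hasSum_bbTrans_zero_mul_pow {s : ℝ}
    (h : HasSum (fun m => bbTrans (fun j => q (j + 1)) 0 m * x ^ m) s) :
    HasSum (fun m => bbTrans q 0 m * x ^ m) (q 0 + (1 - q 0) * x * s) := by
  refine (hasSum_nat_add_iff' 1).1 ?_
  have key : ∀ m, bbTrans q 0 (m + 1) * x ^ (m + 1) =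
      (1 - q 0) * x * (bbTrans (fun j => q (j + 1)) 0 m * x ^ m) := fun m => by
    rw [bbTrans_zero_succ]
    ring
  simp only [key, sum_range_one, bbTrans_zero_zero, pow_zero, mul_one, add_sub_cancel_left]
  exact h.mul_left _

theorem hasSum_bbTrans_succ_mul_pow {l : ℕ} {s t : ℝ}
    (hl : HasSum (fun m => bbTrans (fun j => q (j + 1)) l m * x ^ m) s)
    (hl' : HasSum (fun m => bbTrans (fun j => q (j + 1)) (l + 1) m * x ^ m) t) :
    HasSum (fun m => bbTrans q (l + 1) m * x ^ m) (q 0 * s + (1 - q 0) * x * t) := by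
  refine (hasSum_nat_add_iff' 1).1 ?_
  have key : ∀ m, bbTrans q (l + 1) (m + 1) * x ^ (m + 1) =
      q 0 * (bbTrans (fun j => q (j + 1)) l (m + 1) * x ^ (m + 1)) +
        (1 - q 0) * x * (bbTrans (fun j => q (j + 1)) (l + 1) m * x ^ m) := fun m => by
    rw [bbTrans_succ_succ]
    ring
  have hval : q 0 * s + (1 - q 0) * x * t - ∑ i ∈ range 1, bbTrans q (l + 1) i * x ^ i =
      q 0 * (s - ∑ i ∈ range 1, bbTrans (fun j => q (j + 1)) l i * x ^ i) +
        (1 - q 0) * x * t := by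
    simp only [sum_range_one, bbTrans_succ_zero]
    ring
  simp only [key, hval]
  exact (((hasSum_nat_add_iff' 1).2 hl).mul_left _).add (hl'.mul_left _)

end FirstStepGeneratingFunction

theorem hasSum_bbTrans_cookie_mul_pow {p₁ p₀ x : ℝ} (h : |(1 - p₀) * x| < 1) (l : ℕ) :
    HasSum (fun m => bbTrans (fun j => if j = 0 then p₁ else p₀) l m * x ^ m)
      ((p₁ + (1 - p₁) * x * geomPGF p₀ x) * geomPGF p₀ x ^ l) := by
  have hconst : ∀ l,
      HasSum (fun m => bbTrans (fun j => if j + 1 = 0 then p₁ else p₀) l m * x ^ m)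
        (geomPGF p₀ x ^ (l + 1)) := by
    have hshift : (fun j => if j + 1 = 0 then p₁ else p₀) = fun _ => p₀ :=
      funext fun j => if_neg j.succ_ne_zero
    rw [hshift]
    exact hasSum_bbTrans_const_mul_pow h
  cases l with
  | zero =>
    simpa using hasSum_bbTrans_zero_mul_pow (q := fun j => if j = 0 then p₁ else p₀) (hconst 0)
  | succ l =>
    convert hasSum_bbTrans_succ_mul_pow (q := fun j => if j = 0 then p₁ else p₀)
      (hconst l) (hconst (l + 1)) using 1
    simp only [if_true]
    ring

theorem IsStationaryDist.summable {q π : ℕ → ℝ} (hπ : IsStationaryDist q π) : Summable π := by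
  by_contra h
  simpa [tsum_eq_zero_of_not_summable h] using hπ.2.1

theorem IsStationaryDist.tsum_mul_pow_eq {q π : ℕ → ℝ} (hπ : IsStationaryDist q π)
    (hq : ∀ j, q j ∈ Set.Icc 0 1) {x : ℝ} (hx : 0 ≤ x) {G : ℕ → ℝ}
    (hG : ∀ l, HasSum (fun m => bbTrans q l m * x ^ m) (G l)) (hG1 : ∀ l, G l ≤ 1) :
    ∑' m, π m * x ^ m = ∑' l, π l * G l := by
  have hsum := hπ.summable
  obtain ⟨hπ0, -, hπst⟩ := hπ
  set F : ℕ → ℕ → ℝ := fun l m => π l * (bbTrans q l m * x ^ m)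
  have hF0 : 0 ≤ Function.uncurry F := fun lm =>
    mul_nonneg (hπ0 _) (mul_nonneg (bbTrans_nonneg hq _ _) (pow_nonneg hx _))
  have hrow : ∀ l, HasSum (F l) (π l * G l) := fun l => (hG l).mul_left _
  have hF : Summable (Function.uncurry F) := by
    refine (summable_prod_of_nonneg hF0).2 ⟨fun l => (hrow l).summable, ?_⟩
    refine Summable.of_nonneg_of_le (fun l => tsum_nonneg fun m => hF0 (l, m)) (fun l => ?_)
      hsum
    change ∑' m, F l m ≤ π l
    rw [(hrow l).tsum_eq]
    exact mul_le_of_le_one_right (hπ0 l) (hG1 l)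
  calc ∑' m, π m * x ^ m = ∑' m, ∑' l, F l m := by
        refine tsum_congr fun m => ?_
        rw [hπst m, ← tsum_mul_right]
        simp only [F, mul_assoc]
    _ = ∑' l, ∑' m, F l m := hF.tsum_comm
    _ = ∑' l, π l * G l := tsum_congr fun l => (hrow l).tsum_eq

theorem IsStationaryDist.cookie_tsum_mul_pow_eq {p₁ p₀ : ℝ} {π : ℕ → ℝ}
    (hπ : IsStationaryDist (fun j => if j = 0 then p₁ else p₀) π)
    (hp₁ : p₁ ∈ Set.Icc 0 1) (hp₀ : p₀ ∈ Set.Ioc 0 1) {x : ℝ} (hx : x ∈ Set.Icc 0 1) :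
    ∑' m, π m * x ^ m =
      (p₁ + (1 - p₁) * x * geomPGF p₀ x) * ∑' m, π m * geomPGF p₀ x ^ m := by
  obtain ⟨hf0, hf1⟩ := geomPGF_mem_Icc hp₀ hx
  have hg1 : p₁ + (1 - p₁) * x * geomPGF p₀ x ≤ 1 := by
    have := mul_le_one₀ hx.2 hf0 hf1
    nlinarith [hp₁.2]
  have hq : ∀ j, (fun j => if j = 0 then p₁ else p₀) j ∈ Set.Icc 0 1 := fun j => by
    dsimp only
    split_ifs
    exacts [hp₁, Set.Ioc_subset_Icc_self hp₀]
  have habs : |(1 - p₀) * x| < 1 := by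
    rw [abs_of_nonneg (mul_nonneg (by linarith [hp₀.2]) hx.1)]
    nlinarith [hp₀.1, hp₀.2, hx.1, hx.2]
  rw [hπ.tsum_mul_pow_eq hq hx.1 (hasSum_bbTrans_cookie_mul_pow habs)
    fun l => mul_le_one₀ hg1 (pow_nonneg hf0 l) (pow_le_one₀ hf0 hf1), ← tsum_mul_left]
  exact tsum_congr fun l => by ring

theorem tendsto_tsum_mul_pow_of_tendsto_one {ι : Type*} {l : Filter ι} {a : ℕ → ℝ}
    (ha : Summable fun m => |a m|) {x : ι → ℝ} (hx : Tendsto x l (𝓝 1)) (hx1 : ∀ i, |x i| ≤ 1) :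
    Tendsto (fun i => ∑' m, a m * x i ^ m) l (𝓝 (∑' m, a m)) := by
  have h := tendsto_tsum_of_dominated_convergence ha (fun m => (hx.pow m).const_mul (a m))
    (Eventually.of_forall fun i m => by
      rw [Real.norm_eq_abs, abs_mul, abs_pow]
      exact mul_le_of_le_one_right (abs_nonneg _) (pow_le_one₀ (abs_nonneg _) (hx1 i)))
  simpa using h

/-- `ruinProb ρ k` is the gambler's-ruin probability that the walk started at `k` hits `k + 1`
before `0`. -/
noncomputable def ruinProb (ρ : ℝ) (k : ℕ) : ℝ := (1 - ρ ^ k) / (1 - ρ ^ (k + 1))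

section RuinProb

variable {ρ : ℝ}

theorem ruinProb_zero (ρ : ℝ) : ruinProb ρ 0 = 0 := by
  simp [ruinProb]

theorem one_sub_pow_pos (hρ0 : 0 ≤ ρ) (hρ1 : ρ < 1) {n : ℕ} (hn : n ≠ 0) : 0 < 1 - ρ ^ n :=
  sub_pos.2 (pow_lt_one₀ hρ0 hρ1 hn)

theorem ruinProb_mem_Icc (hρ0 : 0 ≤ ρ) (hρ1 : ρ < 1) (k : ℕ) : ruinProb ρ k ∈ Set.Icc 0 1 := by
  have hden := one_sub_pow_pos hρ0 hρ1 k.succ_ne_zero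
  have hmono : ρ ^ (k + 1) ≤ ρ ^ k := pow_le_pow_of_le_one hρ0 hρ1.le k.le_succ
  exact ⟨div_nonneg (sub_nonneg.2 (pow_le_one₀ hρ0 hρ1.le)) hden.le,
    div_le_one_of_le₀ (by linarith) hden.le⟩

theorem tendsto_ruinProb_atTop (hρ0 : 0 ≤ ρ) (hρ1 : ρ < 1) :
    Tendsto (ruinProb ρ) atTop (𝓝 1) := by
  have h := tendsto_pow_atTop_nhds_zero_of_lt_one hρ0 hρ1
  change Tendsto (fun k => (1 - ρ ^ k) / (1 - ρ ^ (k + 1))) atTop (𝓝 1)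
  simpa [Pi.div_def] using (tendsto_const_nhds.sub h).div
    (tendsto_const_nhds.sub (h.comp (tendsto_add_atTop_nat 1))) (by norm_num : (1 : ℝ) - 0 ≠ 0)

theorem ruinProb_mul_ruinProb_succ (hρ0 : 0 ≤ ρ) (hρ1 : ρ < 1) (k : ℕ) :
    ruinProb ρ k * ruinProb ρ (k + 1) = (1 - ρ ^ k) / (1 - ρ ^ (k + 2)) := by
  have := (one_sub_pow_pos hρ0 hρ1 k.succ_ne_zero).ne'
  rw [ruinProb, ruinProb, div_mul_div_comm, mul_comm (1 - ρ ^ (k + 1)),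
    mul_div_mul_right _ _ this]

theorem geomPGF_ruinProb {p₀ : ℝ} (hp₀ : 0 < p₀) (hρ : ρ = (1 - p₀) / p₀) (hρ0 : 0 ≤ ρ)
    (hρ1 : ρ < 1) (k : ℕ) : geomPGF p₀ (ruinProb ρ k) = ruinProb ρ (k + 1) := by
  have hp : 1 - p₀ = ρ * p₀ := by rw [hρ, div_mul_cancel₀ _ hp₀.ne']
  have h1 := (one_sub_pow_pos hρ0 hρ1 k.succ_ne_zero).ne'
  have h2 := (one_sub_pow_pos hρ0 hρ1 (n := k + 2) (by omega)).ne'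
  have hden : 1 - ρ * p₀ * ((1 - ρ ^ k) / (1 - ρ ^ (k + 1))) =
      p₀ * (1 - ρ ^ (k + 2)) / (1 - ρ ^ (k + 1)) := by
    field_simp
    linear_combination (1 - ρ ^ (k + 1)) * hp
  rw [geomPGF, ruinProb, ruinProb, hp, hden]
  field_simp

theorem abs_div_one_sub_pow_sub_one_le (hρ0 : 0 ≤ ρ) (hρ1 : ρ < 1) (k : ℕ) :
    |(1 - ρ ^ k) / (1 - ρ ^ (k + 2)) - 1| ≤ ρ ^ k := by
  have hden := one_sub_pow_pos hρ0 hρ1 (n := k + 2) (by omega)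
  have hk : ρ ^ (k + 2) ≤ ρ ^ k := pow_le_pow_of_le_one hρ0 hρ1.le (by omega)
  have hk' : ρ ^ (k + k + 2) ≤ ρ ^ (k + 2) := pow_le_pow_of_le_one hρ0 hρ1.le (by omega)
  rw [div_sub_one hden.ne', abs_div, abs_of_pos hden, abs_of_nonpos (by linarith),
    div_le_iff₀ hden]
  nlinarith [show ρ ^ (k + k + 2) = ρ ^ k * ρ ^ (k + 2) by ring]

theorem multipliable_cookie_product (p₁ : ℝ) (hρ0 : 0 ≤ ρ) (hρ1 : ρ < 1) :
    Multipliable fun k : ℕ => p₁ + (1 - p₁) * ((1 - ρ ^ k) / (1 - ρ ^ (k + 2))) := by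
  have e : (fun k : ℕ => p₁ + (1 - p₁) * ((1 - ρ ^ k) / (1 - ρ ^ (k + 2)))) =
      fun k => 1 + (1 - p₁) * ((1 - ρ ^ k) / (1 - ρ ^ (k + 2)) - 1) :=
    funext fun k => by ring
  rw [e]
  refine Real.multipliable_one_add_of_summable <|
    ((summable_geometric_of_lt_one hρ0 hρ1).mul_left |1 - p₁|).of_norm_bounded fun k => ?_
  rw [Real.norm_eq_abs, abs_mul]
  exact mul_le_mul_of_nonneg_left (abs_div_one_sub_pow_sub_one_le hρ0 hρ1 k) (abs_nonneg _)

end RuinProb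

theorem IsStationaryDist.cookie_eq_prod_mul_tsum {p₁ p₀ ρ : ℝ} {π : ℕ → ℝ}
    (hπ : IsStationaryDist (fun j => if j = 0 then p₁ else p₀) π)
    (hp₁ : p₁ ∈ Set.Icc 0 1) (hp₀ : p₀ ∈ Set.Ioc 0 1) (hρ : ρ = (1 - p₀) / p₀) (hρ1 : ρ < 1)
    (n : ℕ) :
    π 0 = (∏ k ∈ range n, (p₁ + (1 - p₁) * ((1 - ρ ^ k) / (1 - ρ ^ (k + 2))))) *
      ∑' m, π m * ruinProb ρ n ^ m := by
  have hρ0 : 0 ≤ ρ := hρ ▸ div_nonneg (sub_nonneg.2 hp₀.2) hp₀.1.le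
  induction n with
  | zero => simp [ruinProb_zero, zero_pow_eq, mul_ite]
  | succ n ih =>
    rw [ih, hπ.cookie_tsum_mul_pow_eq hp₁ hp₀ (ruinProb_mem_Icc hρ0 hρ1 n),
      geomPGF_ruinProb hp₀.1 hρ hρ0 hρ1, mul_assoc _ (ruinProb ρ n),
      ruinProb_mul_ruinProb_succ hρ0 hρ1, prod_range_succ, mul_assoc]

theorem tendsto_of_forall_mul_eq_of_tendsto_one {ι 𝕜 : Type*} [NormedField 𝕜] {l : Filter ι}
    {u v : ι → 𝕜} {a : 𝕜} (h : ∀ i, u i * v i = a) (hv : Tendsto v l (𝓝 1)) :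
    Tendsto u l (𝓝 a) := by
  have hlim : Tendsto (fun i => a * (v i)⁻¹) l (𝓝 a) := by
    simpa using tendsto_const_nhds.mul (hv.inv₀ one_ne_zero)
  refine hlim.congr' ?_
  filter_upwards [hv.eventually_ne one_ne_zero] with i hi
  rw [← h i, mul_inv_cancel_right₀ hi]

/-- **Infinite-product formula for `π 0`.**
Let `p₁ ∈ (0,1)`, `p₀ ∈ (1/2,1)` and `ρ = (1 - p₀)/p₀ ∈ (0,1)`.  If `π` is a stationary
distribution of the backwards branching-like process associated to one cookie of
strength `p₁` and bias parameter `p₀`, then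
`π 0 = ∏' k, (p₁ + (1 - p₁) (1 - ρ^k)/(1 - ρ^(k+2)))`. -/
theorem stationary_zero_mass_infinite_product
    (p₁ p₀ ρ : ℝ) (hp₁ : p₁ ∈ Set.Ioo (0 : ℝ) 1) (hp₀ : p₀ ∈ Set.Ioo (1 / 2 : ℝ) 1)
    (hρ : ρ = (1 - p₀) / p₀)
    (π : ℕ → ℝ) (hπ : IsStationaryDist (fun j => if j = 0 then p₁ else p₀) π) :
    π 0 = ∏' k : ℕ, (p₁ + (1 - p₁) * ((1 - ρ ^ k) / (1 - ρ ^ (k + 2)))) := by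
  obtain ⟨hp₀half, hp₀1⟩ := hp₀
  have hp₀pos : 0 < p₀ := by linarith
  have hρ0 : 0 ≤ ρ := hρ ▸ div_nonneg (by linarith) hp₀pos.le
  have hρ1 : ρ < 1 := by rw [hρ, div_lt_one hp₀pos]; linarith
  have hiter :=
    hπ.cookie_eq_prod_mul_tsum (Set.Ioo_subset_Icc_self hp₁) ⟨hp₀pos, hp₀1.le⟩ hρ hρ1
  have habel : Tendsto (fun n => ∑' m, π m * ruinProb ρ n ^ m) atTop (𝓝 1) := by
    rw [← hπ.2.1]
    refine tendsto_tsum_mul_pow_of_tendsto_one hπ.summable.abs (tendsto_ruinProb_atTop hρ0 hρ1)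
      fun n => ?_
    obtain ⟨h0, h1⟩ := ruinProb_mem_Icc hρ0 hρ1 n
    rwa [abs_of_nonneg h0]
  exact tendsto_nhds_unique
    (tendsto_of_forall_mul_eq_of_tendsto_one (fun n => (hiter n).symm) habel)
    (multipliable_cookie_product p₁ hρ0 hρ1).hasProd.tendsto_prod_nat
end
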